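/- Let J be a symmetric positive definite real 3×3 matrix, t₀ ∈ ℝ, τ, z ∈ ℝ³. Let R, R_r : ℝ → ℝ^{3×3} with R(t₀), R_r(t₀) ∈ SO(3), and ω, ω_r : ℝ → ℝ³. Suppose at t₀: R has derivative R(t₀)·ω(t₀)^×; R_r has derivative R_r(t₀)·ω_r(t₀)^×; ω has derivative J⁻¹(−ω(t₀)^× J ω(t₀) + τ); and ω_r has derivative z. Define R_e(t) := R_r(t)ᵀ R(t) and ω_e(t) := ω(t) − R_e(t)ᵀ ω_r(t). Then at t₀ (writing values at t₀ without argument): R_e has derivative R_e·ω_e^×, and ω_e has derivative J⁻¹(Σ(R_e,ω_e,ω_r)·ω_e − Υ(R_e,ω_r,z) + τ), where Υ(R_e,ω_r,z) := J R_eᵀ z + (R_eᵀω_r)^× J R_eᵀω_r and Σ(R_e,ω_e,ω_r) := (Jω_e)^× + (J R_eᵀω_r)^× − ((R_eᵀω_r)^× J + J (R_eᵀω_r)^×). -/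

import Mathlib

open Matrix

noncomputable section

abbrev M3 : Type := Matrix (Fin 3) (Fin 3) ℝ
abbrev V3 : Type := Fin 3 → ℝ

/-- skew-symmetric matrix associated to `x`: `skew x *ᵥ y = x ×₃ y`. -/
def skew (x : V3) : M3 :=
  !![0, -x 2, x 1; x 2, 0, -x 0; -x 1, x 0, 0]

/-- the special orthogonal group SO(3) as a subset of 3×3 matrices -/
def SO3 : Set M3 := {R | Rᵀ * R = 1 ∧ R.det = 1}

/-- Rodrigues formula -/
def Ra (θ : ℝ) (u : V3) : M3 :=
  1 + Real.sin θ • skew u + (1 - Real.cos θ) • (skew u * skew u)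

/-- `psi M = vec (P_a M)`, the vector part of the antisymmetric projection -/
def psi (M : M3) : V3 :=
  ![(M 2 1 - M 1 2) / 2, (M 0 2 - M 2 0) / 2, (M 1 0 - M 0 1) / 2]

/-- the angular-warping transformation `T(R,θ) = R · Ra(θ,u)` -/
def Tmap (u : V3) (R : M3) (θ : ℝ) : M3 := R * Ra θ u

/-- the potential function `U(R,θ)` on SO(3) × ℝ -/
def Ufun (A : M3) (u : V3) (γ : ℝ) (R : M3) (θ : ℝ) : ℝ :=
  (A * (1 - Tmap u R θ)).trace + γ / 2 * θ ^ 2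

/-- Euclidean norm on ℝ³ -/
def enorm3 (x : V3) : ℝ := Real.sqrt (x ⬝ᵥ x)

/-- Frobenius norm of a 3×3 matrix -/
def fnorm (M : M3) : ℝ := Real.sqrt ((Mᵀ * M).trace)

/-- `E(M) := (tr(M) I − Mᵀ)/2` -/
def Emap (M : M3) : M3 := (2⁻¹ : ℝ) • (M.trace • (1 : M3) - Mᵀ)

/-- `D_R(R,θ)` from Lemma 2 -/
def DR (A : M3) (u : V3) (R : M3) (θ : ℝ) : M3 :=
  Ra θ u * Emap (A * Tmap u R θ) * (Ra θ u)ᵀ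

/-- `D_θ(R,θ)` from Lemma 2 -/
def Dθ (A : M3) (u : V3) (R : M3) (θ : ℝ) : V3 :=
  (Ra θ u * Emap (A * Tmap u R θ)) *ᵥ u - skew (Ra θ u *ᵥ psi (A * Tmap u R θ)) *ᵥ u

/-- Δ(v,u) from the construction of the synergistic gap -/
def Delta (A : M3) (v u : V3) : ℝ :=
  u ⬝ᵥ ((A.trace • (1 : M3) - A - (2 * (v ⬝ᵥ A *ᵥ v)) • ((1 : M3) - vecMulVec v v)) *ᵥ u)

/-- `v` is a unit eigenvector of `A` -/
def IsUnitEigen (A : M3) (v : V3) : Prop :=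
  v ⬝ᵥ v = 1 ∧ ∃ lam : ℝ, A *ᵥ v = lam • v

/-- Ā := (tr(A) I − A)/2 -/
def Abar (A : M3) : M3 := (2⁻¹ : ℝ) • (A.trace • (1 : M3) - A)

/-- `lam` is an eigenvalue of `M` -/
def IsEigen (M : M3) (lam : ℝ) : Prop := ∃ w : V3, w ≠ 0 ∧ M *ᵥ w = lam • w
attribute [local instance] Matrix.normedAddCommGroup Matrix.normedSpace

/-! With `Q = R_rᵀ R ∈ SO(3)`, the product rule gives `Ṙ_e = Q ω^× − ω_r^× Q`, and the
conjugation rule `Q (Qᵀ v)^× = v^× Q` for rotations turns this into `Q (ω − Qᵀ ω_r)^× = R_e ω_e^×`.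
Differentiating `ω_e = ω − R_eᵀ ω_r` then gives `ω̇_e = ω̇ + ω_e × R_eᵀ ω_r − R_eᵀ z`; substituting
Euler's equation at `ω = ω_e + R_eᵀ ω_r` and expanding the gyroscopic term `ω × J ω` bilinearly
produces `Σ` and `Υ`. -/

section MatrixCalculus

variable {𝕜 𝔸 : Type*} [NontriviallyNormedField 𝕜] [NormedRing 𝔸] [NormedAlgebra 𝕜 𝔸]
  {l m n : Type*} {t : 𝕜}

theorem hasDerivAt_matrix_iff [Fintype m] [Fintype n] {f : 𝕜 → Matrix m n 𝔸}
    {f' : Matrix m n 𝔸} :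
    HasDerivAt f f' t ↔ ∀ i j, HasDerivAt (fun s => f s i j) (f' i j) t :=
  ⟨fun h i j => hasDerivAt_pi.1 (hasDerivAt_pi.1 h i) j,
    fun h => hasDerivAt_pi.2 fun i => hasDerivAt_pi.2 (h i)⟩

theorem HasDerivAt.matrix_transpose [Fintype m] [Fintype n] {f : 𝕜 → Matrix m n 𝔸}
    {f' : Matrix m n 𝔸} (hf : HasDerivAt f f' t) : HasDerivAt (fun s => (f s)ᵀ) f'ᵀ t :=
  hasDerivAt_matrix_iff.2 fun i j => hasDerivAt_matrix_iff.1 hf j i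

theorem HasDerivAt.matrix_mul [Fintype l] [Fintype m] [Fintype n] {f : 𝕜 → Matrix l m 𝔸}
    {g : 𝕜 → Matrix m n 𝔸} {f' : Matrix l m 𝔸} {g' : Matrix m n 𝔸}
    (hf : HasDerivAt f f' t) (hg : HasDerivAt g g' t) :
    HasDerivAt (fun s => f s * g s) (f' * g t + f t * g') t := by
  refine hasDerivAt_matrix_iff.2 fun i j => ?_
  simp only [Matrix.add_apply, Matrix.mul_apply, ← Finset.sum_add_distrib]
  exact HasDerivAt.fun_sum fun k _ =>
    (hasDerivAt_matrix_iff.1 hf i k).fun_mul (hasDerivAt_matrix_iff.1 hg k j)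

theorem HasDerivAt.matrix_mulVec [Fintype m] [Fintype n] {f : 𝕜 → Matrix m n 𝔸}
    {v : 𝕜 → n → 𝔸} {f' : Matrix m n 𝔸} {v' : n → 𝔸}
    (hf : HasDerivAt f f' t) (hv : HasDerivAt v v' t) :
    HasDerivAt (fun s => f s *ᵥ v s) (f' *ᵥ v t + f t *ᵥ v') t := by
  refine hasDerivAt_pi.2 fun i => ?_
  simp only [Pi.add_apply, Matrix.mulVec, dotProduct, ← Finset.sum_add_distrib]
  exact HasDerivAt.fun_sum fun k _ =>
    (hasDerivAt_matrix_iff.1 hf i k).fun_mul (hasDerivAt_pi.1 hv k)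

end MatrixCalculus

theorem skew_mulVec (x y : V3) : skew x *ᵥ y = x ⨯₃ y := by
  ext i
  fin_cases i <;> simp [skew, cross_apply, mulVec, dotProduct, Fin.sum_univ_three] <;> ring

theorem skew_transpose (x : V3) : (skew x)ᵀ = -skew x := by
  ext i j; fin_cases i <;> fin_cases j <;> simp [skew]

theorem skew_sub (x y : V3) : skew (x - y) = skew x - skew y := by
  ext i j; fin_cases i <;> fin_cases j <;> simp [skew] <;> ring

theorem transpose_mul_skew_mulVec_mul (M : M3) (v : V3) :
    Mᵀ * skew (M *ᵥ v) * M = M.det • skew v := by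
  ext i j
  fin_cases i <;> fin_cases j <;>
    simp [skew, mul_apply, mulVec, dotProduct, Fin.sum_univ_three, det_fin_three] <;> ring

theorem mul_transpose_of_mem_SO3 {Q : M3} (hQ : Q ∈ SO3) : Q * Qᵀ = 1 :=
  mul_eq_one_comm.mp hQ.1

theorem transpose_mem_SO3 {Q : M3} (hQ : Q ∈ SO3) : Qᵀ ∈ SO3 :=
  ⟨by rw [transpose_transpose, mul_transpose_of_mem_SO3 hQ], by rw [det_transpose, hQ.2]⟩

theorem mul_mem_SO3 {P Q : M3} (hP : P ∈ SO3) (hQ : Q ∈ SO3) : P * Q ∈ SO3 :=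
  ⟨by rw [transpose_mul, Matrix.mul_assoc, ← Matrix.mul_assoc Pᵀ, hP.1, Matrix.one_mul, hQ.1],
    by rw [det_mul, hP.2, hQ.2, one_mul]⟩

theorem mul_skew_transpose_mulVec_of_mem_SO3 {Q : M3} (hQ : Q ∈ SO3) (v : V3) :
    Q * skew (Qᵀ *ᵥ v) = skew v * Q := by
  have h := transpose_mul_skew_mulVec_mul Qᵀ v
  rw [transpose_transpose, det_transpose, hQ.2, one_smul] at h
  calc Q * skew (Qᵀ *ᵥ v) = Q * skew (Qᵀ *ᵥ v) * Qᵀ * Q := by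
        rw [Matrix.mul_assoc _ Qᵀ, hQ.1, Matrix.mul_one]
    _ = skew v * Q := by rw [h]

-- The gyroscopic term `ω × J ω` at `ω = a + b`, regrouped as `Σ a − b × J b`.
theorem euler_cross_identity (J : M3) (a b : V3) :
    -(skew (a + b) *ᵥ (J *ᵥ (a + b))) + J *ᵥ (skew a *ᵥ b)
      = (skew (J *ᵥ a) + skew (J *ᵥ b) - (skew b * J + J * skew b)) *ᵥ a
        - skew b *ᵥ (J *ᵥ b) := by
  simp only [add_mulVec, sub_mulVec, ← mulVec_mulVec, skew_mulVec, mulVec_add, mulVec_neg,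
    map_add, LinearMap.add_apply, ← cross_anticomm a b, ← cross_anticomm a (J *ᵥ a),
    ← cross_anticomm a (J *ᵥ b)]
  abel

theorem hasDerivAt_relative_attitude {R Rr : ℝ → M3} {ω ωr : V3} {t₀ : ℝ}
    (hR : HasDerivAt R (R t₀ * skew ω) t₀) (hRr : HasDerivAt Rr (Rr t₀ * skew ωr) t₀)
    (hQ : (Rr t₀)ᵀ * R t₀ ∈ SO3) :
    HasDerivAt (fun t => (Rr t)ᵀ * R t)
      ((Rr t₀)ᵀ * R t₀ * skew (ω - ((Rr t₀)ᵀ * R t₀)ᵀ *ᵥ ωr)) t₀ := by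
  convert hRr.matrix_transpose.matrix_mul hR using 1
  rw [skew_sub, Matrix.mul_sub, mul_skew_transpose_mulVec_of_mem_SO3 hQ, transpose_mul,
    skew_transpose]
  simp only [Matrix.neg_mul, Matrix.mul_assoc]
  abel

theorem tracking_error_dynamics
    (J : M3) (hJ : J.PosDef) (t₀ : ℝ) (τ z : V3)
    (R Rr : ℝ → M3) (hR0 : R t₀ ∈ SO3) (hRr0 : Rr t₀ ∈ SO3)
    (ω ωr : ℝ → V3)
    (hR : HasDerivAt R (R t₀ * skew (ω t₀)) t₀)
    (hRr : HasDerivAt Rr (Rr t₀ * skew (ωr t₀)) t₀)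
    (hω : HasDerivAt ω (J⁻¹ *ᵥ (-(skew (ω t₀) *ᵥ (J *ᵥ ω t₀)) + τ)) t₀)
    (hωr : HasDerivAt ωr z t₀)
    (Re : ℝ → M3) (hRe : ∀ t, Re t = (Rr t)ᵀ * R t)
    (ωe : ℝ → V3) (hωe : ∀ t, ωe t = ω t - (Re t)ᵀ *ᵥ ωr t)
    (Υv : V3)
    (hΥ : Υv = J *ᵥ ((Re t₀)ᵀ *ᵥ z) +
      skew ((Re t₀)ᵀ *ᵥ ωr t₀) *ᵥ (J *ᵥ ((Re t₀)ᵀ *ᵥ ωr t₀)))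
    (Sm : M3)
    (hSm : Sm = skew (J *ᵥ ωe t₀) + skew (J *ᵥ ((Re t₀)ᵀ *ᵥ ωr t₀)) -
      (skew ((Re t₀)ᵀ *ᵥ ωr t₀) * J + J * skew ((Re t₀)ᵀ *ᵥ ωr t₀))) :
    HasDerivAt Re (Re t₀ * skew (ωe t₀)) t₀ ∧
    HasDerivAt ωe (J⁻¹ *ᵥ (Sm *ᵥ ωe t₀ - Υv + τ)) t₀ := by
  have hQ : (Rr t₀)ᵀ * R t₀ ∈ SO3 := mul_mem_SO3 (transpose_mem_SO3 hRr0) hR0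
  have hRe' : HasDerivAt Re (Re t₀ * skew (ωe t₀)) t₀ := by
    simpa only [← hRe, ← hωe, ← funext hRe] using hasDerivAt_relative_attitude hR hRr hQ
  refine ⟨hRe', ?_⟩
  have hω₀ : ω t₀ = ωe t₀ + (Re t₀)ᵀ *ᵥ ωr t₀ := by rw [hωe, sub_add_cancel]
  have hJJ : ∀ y : V3, J⁻¹ *ᵥ (J *ᵥ y) = y := fun y => by
    rw [mulVec_mulVec, nonsing_inv_mul J ((isUnit_iff_isUnit_det J).1 hJ.isUnit), one_mulVec]
  refine HasDerivAt.congr_of_eventuallyEq ?_ (.of_forall hωe)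
  refine (hω.sub (hRe'.matrix_transpose.matrix_mulVec hωr)).congr_deriv ?_
  set Q := Re t₀
  set a := ωe t₀
  set b := Qᵀ *ᵥ ωr t₀
  calc J⁻¹ *ᵥ (-(skew (ω t₀) *ᵥ (J *ᵥ ω t₀)) + τ) - ((Q * skew a)ᵀ *ᵥ ωr t₀ + Qᵀ *ᵥ z)
      = J⁻¹ *ᵥ (-(skew (a + b) *ᵥ (J *ᵥ (a + b))) + τ) - (-(skew a *ᵥ b) + Qᵀ *ᵥ z) := by
        rw [hω₀, transpose_mul, skew_transpose, neg_mul, neg_mulVec, ← mulVec_mulVec]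
    _ = J⁻¹ *ᵥ (-(skew (a + b) *ᵥ (J *ᵥ (a + b))) + J *ᵥ (skew a *ᵥ b) - J *ᵥ (Qᵀ *ᵥ z) + τ) := by
        simp only [mulVec_add, mulVec_sub, mulVec_neg, hJJ]; abel
    _ = J⁻¹ *ᵥ (Sm *ᵥ a - Υv + τ) := by
        rw [euler_cross_identity, hSm, hΥ]; abel_nf
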